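/- arXiv:2411.04795 — 3 statements merged into one kernel-verified Lean document; each statement's English description precedes it below -/
import Mathlib

section
/- Let f_1,...,f_m and g_1,...,g_n be positive functions of ε > 0 such that for every i ∈ {1,...,m} and j ∈ {1,...,n} the limit lim_{ε→0} f_i(ε)/g_j(ε) exists in [0,∞] (as an extended nonnegative real). Then the limit lim_{ε→0} (f_1(ε)+...+f_m(ε))/(g_1(ε)+...+g_n(ε)) also exists in [0,∞]. -/
/-!
Inverting in `ℝ≥0∞`, `f i / ∑ⱼ g j = (∑ⱼ (f i / g j)⁻¹)⁻¹`, and inversion and finite sums are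
continuous on `ℝ≥0∞` (with `0⁻¹ = ∞`, `∞⁻¹ = 0`). So each `f i / ∑ⱼ g j` has a limit, and
summing over `i` gives the limit `∑ᵢ (∑ⱼ (lim f i / g j)⁻¹)⁻¹` of `∑ᵢ f i / ∑ⱼ g j`.
-/

open Filter Topology

namespace ENNReal

theorem sum_div {ι : Type*} (s : Finset ι) (a : ι → ℝ≥0∞) (b : ℝ≥0∞) :
    (∑ i ∈ s, a i) / b = ∑ i ∈ s, a i / b := by
  simp only [div_eq_mul_inv, Finset.sum_mul]

theorem div_sum_eq_inv_sum_inv_div {κ : Type*} (s : Finset κ) {a : ℝ≥0∞} (ha₀ : a ≠ 0)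
    (ha : a ≠ ∞) (b : κ → ℝ≥0∞) :
    a / ∑ j ∈ s, b j = (∑ j ∈ s, (a / b j)⁻¹)⁻¹ := by
  have inv_div_eq (j : κ) : (a / b j)⁻¹ = b j / a := ENNReal.inv_div (.inr ha) (.inr ha₀)
  simp only [inv_div_eq, ← sum_div, ENNReal.inv_div (.inl ha) (.inl ha₀)]

theorem tendsto_sum_div_sum {α ι κ : Type*} [Fintype ι] [Fintype κ] {l : Filter α}
    {a : ι → α → ℝ≥0∞} {b : κ → α → ℝ≥0∞} {L : ι → κ → ℝ≥0∞}
    (ha₀ : ∀ i, ∀ᶠ x in l, a i x ≠ 0) (ha : ∀ i, ∀ᶠ x in l, a i x ≠ ∞)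
    (hL : ∀ i j, Tendsto (fun x => a i x / b j x) l (𝓝 (L i j))) :
    Tendsto (fun x => (∑ i, a i x) / ∑ j, b j x) l (𝓝 (∑ i, (∑ j, (L i j)⁻¹)⁻¹)) := by
  simp only [sum_div]
  refine tendsto_finsetSum _ fun i _ => ?_
  have hinv : Tendsto (fun x => (∑ j, (a i x / b j x)⁻¹)⁻¹) l (𝓝 (∑ j, (L i j)⁻¹)⁻¹) :=
    (tendsto_finsetSum _ fun j _ => (hL i j).inv).inv
  refine hinv.congr' ?_
  filter_upwards [ha₀ i, ha i] with x hx₀ hx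
  exact (div_sum_eq_inv_sum_inv_div _ hx₀ hx _).symm

end ENNReal

theorem stmt0_general (m n : ℕ) (hn : 0 < n)
    (f : Fin m → ℝ → ℝ) (g : Fin n → ℝ → ℝ)
    (hf : ∀ i, ∀ ε > (0:ℝ), 0 < f i ε) (hg : ∀ j, ∀ ε > (0:ℝ), 0 < g j ε)
    (h : ∀ i j, ∃ L : ENNReal,
      Tendsto (fun ε => ENNReal.ofReal (f i ε / g j ε)) (𝓝[>] (0:ℝ)) (𝓝 L)) :
    ∃ L : ENNReal,
      Tendsto (fun ε => ENNReal.ofReal ((∑ i, f i ε) / (∑ j, g j ε)))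
        (𝓝[>] (0:ℝ)) (𝓝 L) := by
  choose L hL using h
  have hpos : ∀ᶠ ε in 𝓝[>] (0:ℝ), 0 < ε := self_mem_nhdsWithin
  have hL' (i j) : Tendsto (fun ε => ENNReal.ofReal (f i ε) / ENNReal.ofReal (g j ε))
      (𝓝[>] 0) (𝓝 (L i j)) :=
    (hL i j).congr' <| by
      filter_upwards [hpos] with ε hε using ENNReal.ofReal_div_of_pos (hg j ε hε)
  have hf₀ (i) : ∀ᶠ ε in 𝓝[>] (0:ℝ), ENNReal.ofReal (f i ε) ≠ 0 := by
    filter_upwards [hpos] with ε hε using ENNReal.ofReal_ne_zero_iff.mpr (hf i ε hε)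
  refine ⟨_, (ENNReal.tendsto_sum_div_sum hf₀ (fun _ => .of_forall fun _ => ENNReal.ofReal_ne_top)
    hL').congr' ?_⟩
  filter_upwards [hpos] with ε hε
  have hg_sum : 0 < ∑ j, g j ε :=
    Finset.sum_pos (fun j _ => hg j ε hε) ⟨⟨0, hn⟩, Finset.mem_univ _⟩
  rw [ENNReal.ofReal_div_of_pos hg_sum, ENNReal.ofReal_sum_of_nonneg (fun i _ => (hf i ε hε).le),
    ENNReal.ofReal_sum_of_nonneg (fun j _ => (hg j ε hε).le)]

/-- Lemma 1 (paper): if all pairwise ratio limits `f i / g j` exist in `[0,∞]`,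
then the ratio of the sums has a limit in `[0,∞]` as `ε ↓ 0`. -/
theorem stmt0 (m n : ℕ) (hm : 0 < m) (hn : 0 < n)
    (f : Fin m → ℝ → ℝ) (g : Fin n → ℝ → ℝ)
    (hf : ∀ i, ∀ ε > (0:ℝ), 0 < f i ε) (hg : ∀ j, ∀ ε > (0:ℝ), 0 < g j ε)
    (h : ∀ i j, ∃ L : ENNReal,
      Tendsto (fun ε => ENNReal.ofReal (f i ε / g j ε)) (𝓝[>] (0:ℝ)) (𝓝 L)) :
    ∃ L : ENNReal,
      Tendsto (fun ε => ENNReal.ofReal ((∑ i, f i ε) / (∑ j, g j ε)))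
        (𝓝[>] (0:ℝ)) (𝓝 L) :=
  stmt0_general m n hn f g hf hg h
end

section
/- Suppose P_{ij}(ε) > 0 for all ε > 0 and all i ≠ j in {1,...,M}, with Σ_{j≠i} P_{ij}(ε) = 1 for each i, and suppose that for every pair (i,j), (i,j') with i ≠ j, i ≠ j' the limit lim_{ε→0} P_{ij}(ε)/P_{ij'}(ε) exists in [0,∞]. Then for every i ≠ j the limit P_{ij}^0 = lim_{ε→0} P_{ij}(ε) exists in [0,1], and moreover Σ_{j≠i} P_{ij}^0 = 1 for each i. -/
open Filter Topology
open scoped ENNReal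

section RatioLimits

variable {α ι : Type*} {l : Filter α}

lemma tendsto_of_tendsto_ofReal_inv {f : α → ℝ} {L : ℝ≥0∞} (hf : ∀ᶠ x in l, 0 < f x)
    (hL : L ≠ 0) (h : Tendsto (fun x => ENNReal.ofReal (f x)⁻¹) l (𝓝 L)) :
    Tendsto f l (𝓝 L⁻¹.toReal) := by
  have hofReal : Tendsto (fun x => ENNReal.ofReal (f x)) l (𝓝 L⁻¹) := by
    refine h.inv.congr' ?_
    filter_upwards [hf] with x hx
    rw [ENNReal.ofReal_inv_of_pos hx, inv_inv]
  refine ((ENNReal.tendsto_toReal (ENNReal.inv_ne_top.mpr hL)).comp hofReal).congr' ?_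
  filter_upwards [hf] with x hx
  exact ENNReal.toReal_ofReal hx.le

/-- The ratios `p k / p j` sum to `(p j)⁻¹`, whose limit in `[0, ∞]` is at least `1` because of
the term `k = j`; so `p j` has a limit in `[0, 1]`. -/
lemma exists_tendsto_Icc_of_tendsto_ratio [l.NeBot] {s : Finset ι} {p : ι → α → ℝ} {j : ι}
    (hj : j ∈ s) (hpos : ∀ k ∈ s, ∀ᶠ x in l, 0 < p k x)
    (hsum : ∀ᶠ x in l, ∑ k ∈ s, p k x = 1)
    (hratio : ∀ k ∈ s, ∃ L : ℝ≥0∞, Tendsto (fun x => ENNReal.ofReal (p k x / p j x)) l (𝓝 L)) :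
    ∃ c ∈ Set.Icc (0 : ℝ) 1, Tendsto (p j) l (𝓝 c) := by
  choose! L hL using hratio
  have hpos_all : ∀ᶠ x in l, ∀ k ∈ s, 0 < p k x := (s.eventually_all).mpr hpos
  have hinv : Tendsto (fun x => ENNReal.ofReal (p j x)⁻¹) l (𝓝 (∑ k ∈ s, L k)) := by
    refine (tendsto_finsetSum s hL).congr' ?_
    filter_upwards [hpos_all, hsum] with x hx hx_sum
    rw [← ENNReal.ofReal_sum_of_nonneg fun k hk => div_nonneg (hx k hk).le (hx j hj).le,
      ← Finset.sum_div, hx_sum, one_div]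
  have hLj : L j = 1 := by
    refine tendsto_nhds_unique (hL j hj) (tendsto_const_nhds.congr' ?_)
    filter_upwards [hpos j hj] with x hx
    rw [div_self hx.ne', ENNReal.ofReal_one]
  have hone_le : 1 ≤ ∑ k ∈ s, L k := hLj ▸ Finset.single_le_sum (fun k _ => zero_le) hj
  refine ⟨(∑ k ∈ s, L k)⁻¹.toReal, ⟨ENNReal.toReal_nonneg, ?_⟩,
    tendsto_of_tendsto_ofReal_inv (hpos j hj) (one_pos.trans_le hone_le).ne' hinv⟩
  simpa using ENNReal.toReal_mono ENNReal.one_ne_top (ENNReal.inv_le_one.mpr hone_le)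

end RatioLimits

theorem stmt1_general (M : ℕ) (P : Fin M → Fin M → ℝ → ℝ)
    (hpos : ∀ i j, i ≠ j → ∀ ε > (0:ℝ), 0 < P i j ε)
    (hsum : ∀ i, ∀ ε > (0:ℝ), ∑ j ∈ Finset.univ.filter (fun j => j ≠ i), P i j ε = 1)
    (hreg : ∀ i j j', i ≠ j → i ≠ j' → ∃ L : ENNReal,
      Tendsto (fun ε => ENNReal.ofReal (P i j ε / P i j' ε)) (𝓝[>] (0:ℝ)) (𝓝 L)) :
    ∃ P0 : Fin M → Fin M → ℝ,
      (∀ i j, i ≠ j → P0 i j ∈ Set.Icc (0:ℝ) 1 ∧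
        Tendsto (fun ε => P i j ε) (𝓝[>] (0:ℝ)) (𝓝 (P0 i j))) ∧
      (∀ i, ∑ j ∈ Finset.univ.filter (fun j => j ≠ i), P0 i j = 1) := by
  have hmem {i j : Fin M} : j ∈ Finset.univ.filter (fun j => j ≠ i) ↔ i ≠ j := by
    simp [eq_comm]
  have hsum' (i : Fin M) :
      ∀ᶠ ε in 𝓝[>] (0 : ℝ), ∑ j ∈ Finset.univ.filter (fun j => j ≠ i), P i j ε = 1 :=
    eventually_nhdsWithin_of_forall (hsum i)
  have key (i j : Fin M) (hij : i ≠ j) :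
      ∃ c ∈ Set.Icc (0 : ℝ) 1, Tendsto (P i j) (𝓝[>] 0) (𝓝 c) :=
    exists_tendsto_Icc_of_tendsto_ratio (hmem.mpr hij)
      (fun k hk => eventually_nhdsWithin_of_forall (hpos i k (hmem.mp hk))) (hsum' i)
      (fun k hk => hreg i k j (hmem.mp hk) hij)
  choose! P0 hP0_mem hP0_lim using key
  refine ⟨P0, fun i j hij => ⟨hP0_mem i j hij, hP0_lim i j hij⟩, fun i => ?_⟩
  refine tendsto_nhds_unique ?_ ((tendsto_congr' (hsum' i)).mpr tendsto_const_nhds)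
  exact tendsto_finsetSum _ fun j hj => hP0_lim i j (hmem.mp hj)

/-- If the transition probabilities `P i j (ε)` are positive, sum to one over `j ≠ i`,
and all ratios `P i j / P i j'` have limits in `[0,∞]` as `ε ↓ 0`, then each
`P i j (ε)` converges to some `P⁰ i j ∈ [0,1]`, and `∑_{j ≠ i} P⁰ i j = 1`. -/
theorem stmt1 (M : ℕ) (hM : 2 ≤ M) (P : Fin M → Fin M → ℝ → ℝ)
    (hpos : ∀ i j, i ≠ j → ∀ ε > (0:ℝ), 0 < P i j ε)
    (hsum : ∀ i, ∀ ε > (0:ℝ), ∑ j ∈ Finset.univ.filter (fun j => j ≠ i), P i j ε = 1)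
    (hreg : ∀ i j j', i ≠ j → i ≠ j' → ∃ L : ENNReal,
      Tendsto (fun ε => ENNReal.ofReal (P i j ε / P i j' ε)) (𝓝[>] (0:ℝ)) (𝓝 L)) :
    ∃ P0 : Fin M → Fin M → ℝ,
      (∀ i j, i ≠ j → P0 i j ∈ Set.Icc (0:ℝ) 1 ∧
        Tendsto (fun ε => P i j ε) (𝓝[>] (0:ℝ)) (𝓝 (P0 i j))) ∧
      (∀ i, ∑ j ∈ Finset.univ.filter (fun j => j ≠ i), P0 i j = 1) :=
  stmt1_general M P hpos hsum hreg
end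

section
/- Let X_n^ε be a Markov chain on {1,...,M'} ∪ F with transition probabilities P_{jk}^ε converging to P_{jk}^0, where E = {1,...,M'} is one ergodic class under P^0 with invariant measure λ and transitions from E to F vanish as ε ↓ 0. Let θ^ε be the first hitting time of F starting from E, and let G ⊆ F be nonempty. Then as ε ↓ 0, P(X_{θ^ε}^ε ∈ G) is asymptotically equivalent to ( Σ_{k∈G} Σ_{j∈E} λ(j)P_{jk}^ε ) / ( Σ_{k∈F} Σ_{j∈E} λ(j)P_{jk}^ε ), uniformly over the starting state in E. -/
/-!
Let `Q` be the chain killed on leaving `E`, `g` its one-step exit probabilities into `G` and `f`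
those into `F`, so that the exit-into-`G` probability `u = ∑ₙ Qⁿ g` solves `u = Q u + g`.
Pairing with `λ` gives the exact identity `(λ ⬝ u) (λ ⬝ f) - λ ⬝ g = ∑_b (λQ - λ)_b (u_b - λ ⬝ u)`,
so `u_i (λ ⬝ f) / (λ ⬝ g) - 1` is controlled by `‖λQ - λ‖₁` times the oscillation of `u`.
Irreducibility of `P⁰` yields a Doeblin minorization `∑_{n<m} Qⁿ ≥ δ > 0` for small `ε`, which
bounds that oscillation by `O(λ ⬝ f · λ ⬝ u + λ ⬝ g)`, and both `‖λQ - λ‖₁` and `λ ⬝ f` tend to `0`.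
-/

open Filter Topology Matrix Finset

lemma abs_mul_div_sub_one_le {x c AF AG γ D κ : ℝ} (hAG : 0 < AG) (hAF : 0 ≤ AF) (hγ : 0 ≤ γ)
    (hc : 0 ≤ c) (hxc : |x - c| ≤ D) (hpair : |c * AF - AG| ≤ γ * D)
    (hD : D ≤ κ * (AF * c + AG)) (hγκ : γ * κ ≤ 1 / 2) :
    |x * AF / AG - 1| ≤ 4 * κ * (AF + γ) := by
  have hD0 : 0 ≤ D := (abs_nonneg _).trans hxc
  have hκ : 0 ≤ κ := nonneg_of_mul_nonneg_left (hD0.trans hD) (by positivity)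
  -- `γ κ ≤ 1/2` turns the pairing bound into `c AF ≤ 3 AG`, hence `D ≤ 4 κ AG`.
  have hcAF : c * AF ≤ 3 * AG := by
    have := (abs_le.1 hpair).2
    nlinarith [mul_le_mul_of_nonneg_left hD hγ]
  have hD4 : D ≤ 4 * κ * AG := by nlinarith
  have hx : |x * AF - AG| ≤ D * (AF + γ) :=
    calc |x * AF - AG| = |(x - c) * AF + (c * AF - AG)| := by ring_nf
      _ ≤ |x - c| * AF + γ * D := by
          rw [← abs_of_nonneg hAF, ← abs_mul, abs_of_nonneg hAF]
          exact (abs_add_le _ _).trans (add_le_add le_rfl hpair)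
      _ ≤ D * (AF + γ) := by nlinarith
  rw [div_sub_one hAG.ne', abs_div, abs_of_pos hAG, div_le_iff₀ hAG]
  nlinarith

namespace Matrix

variable {ι : Type*} [Fintype ι]

lemma mulVec_mono_of_nonneg {Q : Matrix ι ι ℝ} (hQ : ∀ a b, 0 ≤ Q a b) {v w : ι → ℝ}
    (hvw : v ≤ w) : Q *ᵥ v ≤ Q *ᵥ w := fun a =>
  dotProduct_le_dotProduct_of_nonneg_left hvw (hQ a)

lemma mulVec_nonneg_of_nonneg {Q : Matrix ι ι ℝ} (hQ : ∀ a b, 0 ≤ Q a b) {v : ι → ℝ}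
    (hv : 0 ≤ v) : 0 ≤ Q *ᵥ v := by
  simpa using mulVec_mono_of_nonneg hQ hv

lemma le_dotProduct_div {w v : ι → ℝ} {l : ℝ} (hl : 0 < l) (hw : ∀ a, l ≤ w a) (hv : 0 ≤ v)
    (a : ι) : v a ≤ (w ⬝ᵥ v) / l := by
  rw [le_div_iff₀ hl, mul_comm]
  calc l * v a ≤ w a * v a := mul_le_mul_of_nonneg_right (hw a) (hv a)
    _ ≤ w ⬝ᵥ v := single_le_sum (fun b _ => mul_nonneg (hl.le.trans (hw b)) (hv b)) (mem_univ a)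

lemma dotProduct_le_of_le {w u : ι → ℝ} {C : ℝ} (hw0 : 0 ≤ w) (hw1 : ∑ a, w a = 1)
    (hu : ∀ a, u a ≤ C) : w ⬝ᵥ u ≤ C :=
  calc w ⬝ᵥ u ≤ ∑ a, w a * C := sum_le_sum fun a _ => mul_le_mul_of_nonneg_left (hu a) (hw0 a)
    _ = C := by rw [← sum_mul, hw1, one_mul]

lemma le_dotProduct_of_le {w u : ι → ℝ} {C : ℝ} (hw0 : 0 ≤ w) (hw1 : ∑ a, w a = 1)
    (hu : ∀ a, C ≤ u a) : C ≤ w ⬝ᵥ u := by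
  have := dotProduct_le_of_le (u := -u) (C := -C) hw0 hw1 fun a => neg_le_neg (hu a)
  rwa [dotProduct_neg, neg_le_neg_iff] at this

-- Doeblin's argument: every two rows of `S` overlap in mass at least `card ι * δ`, so
-- `t • u = S *ᵥ u + R` forces the oscillation of `u` down to the size of the errors `F` and `G`.
lemma card_mul_sub_le_of_minorization {S : Matrix ι ι ℝ} {u R : ι → ℝ} {t δ F G : ℝ}
    (hδ : ∀ a b, δ ≤ S a b) (hS_le : ∀ a, (S *ᵥ 1) a ≤ t) (hS_ge : ∀ a, t - F ≤ (S *ᵥ 1) a)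
    (hR0 : 0 ≤ R) (hRG : ∀ a, R a ≤ G) (hu : t • u = S *ᵥ u + R) (hu0 : 0 ≤ u) {a b : ι}
    (hmax : ∀ c, u c ≤ u a) (hmin : ∀ c, u b ≤ u c) :
    Fintype.card ι * δ * (u a - u b) ≤ F * u b + G := by
  have hsplit : ∀ x, (S *ᵥ u) x = ∑ c, (S x c - δ) * u c + δ * ∑ c, u c := fun x => by
    simp only [mulVec, dotProduct, sub_mul, sum_sub_distrib, mul_sum]; ring
  have hrow : ∀ x, ∑ c, (S x c - δ) = (S *ᵥ 1) x - Fintype.card ι * δ := fun x => by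
    simp [mulVec, dotProduct, sum_sub_distrib]
  have hupper : ∑ c, (S a c - δ) * u c ≤ (t - Fintype.card ι * δ) * u a :=
    calc ∑ c, (S a c - δ) * u c ≤ ∑ c, (S a c - δ) * u a :=
          sum_le_sum fun c _ => mul_le_mul_of_nonneg_left (hmax c) (sub_nonneg.2 (hδ a c))
      _ ≤ (t - Fintype.card ι * δ) * u a := by
          rw [← sum_mul, hrow]; gcongr; exacts [hu0 a, hS_le a]
  have hlower : (t - F - Fintype.card ι * δ) * u b ≤ ∑ c, (S b c - δ) * u c :=
    calc (t - F - Fintype.card ι * δ) * u b ≤ ∑ c, (S b c - δ) * u b := by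
          rw [← sum_mul, hrow]; gcongr; exacts [hu0 b, hS_ge b]
      _ ≤ ∑ c, (S b c - δ) * u c :=
          sum_le_sum fun c _ => mul_le_mul_of_nonneg_left (hmin c) (sub_nonneg.2 (hδ b c))
  have ha := congrFun hu a
  have hb := congrFun hu b
  simp only [Pi.smul_apply, Pi.add_apply, smul_eq_mul, hsplit] at ha hb
  have hRb : 0 ≤ R b := hR0 b
  nlinarith [hRG a]

def deficit (Q : Matrix ι ι ℝ) : ι → ℝ := 1 - Q *ᵥ 1

lemma dotProduct_mul_dotProduct_deficit_sub (Q : Matrix ι ι ℝ) {w u g : ι → ℝ}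
    (hw1 : ∑ a, w a = 1) (hu : u = Q *ᵥ u + g) :
    (w ⬝ᵥ u) * (w ⬝ᵥ deficit Q) - w ⬝ᵥ g = ∑ b, (w ᵥ* Q - w) b * (u b - w ⬝ᵥ u) := by
  have h1 : w ⬝ᵥ u = (w ᵥ* Q) ⬝ᵥ u + w ⬝ᵥ g := by
    conv_lhs => rw [hu]
    rw [dotProduct_add, dotProduct_mulVec]
  have h2 : w ⬝ᵥ deficit Q = 1 - (w ᵥ* Q) ⬝ᵥ 1 := by
    rw [deficit, dotProduct_sub, dotProduct_mulVec, dotProduct_one, hw1]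
  have h3 : ∑ b, (w ᵥ* Q - w) b * (u b - w ⬝ᵥ u)
      = (w ᵥ* Q) ⬝ᵥ u - w ⬝ᵥ u - (w ⬝ᵥ u) * ((w ᵥ* Q) ⬝ᵥ 1 - ∑ b, w b) := by
    set c := w ⬝ᵥ u with hc
    simp only [dotProduct, Pi.sub_apply, Pi.one_apply, mul_one, mul_sub, sub_mul,
      sum_sub_distrib, ← sum_mul] at hc ⊢
    rw [← hc]
    ring
  rw [h2, h3, hw1]
  linear_combination h1

variable [DecidableEq ι]

variable (ι) in
def subStochastic : Submonoid (Matrix ι ι ℝ) where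
  carrier := {Q | (∀ a b, 0 ≤ Q a b) ∧ Q *ᵥ 1 ≤ 1}
  mul_mem' {Q R} hQ hR := by
    refine ⟨fun a b => sum_nonneg fun c _ => mul_nonneg (hQ.1 a c) (hR.1 c b), ?_⟩
    rw [← mulVec_mulVec]
    exact (mulVec_mono_of_nonneg hQ.1 hR.2).trans hQ.2
  one_mem' := ⟨fun a b => by by_cases h : a = b <;> simp [one_apply, h], by simp⟩

section subStochastic

variable {Q : Matrix ι ι ℝ}

lemma mulVec_apply_le_of_mem_subStochastic (hQ : Q ∈ subStochastic ι) {v : ι → ℝ} {C : ℝ}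
    (hC : 0 ≤ C) (hv : ∀ a, v a ≤ C) (a : ι) : (Q *ᵥ v) a ≤ C := by
  have hvC : v ≤ C • 1 := fun a => by simpa using hv a
  calc (Q *ᵥ v) a ≤ (Q *ᵥ (C • (1 : ι → ℝ))) a := mulVec_mono_of_nonneg hQ.1 hvC a
    _ = C * (Q *ᵥ 1) a := by rw [mulVec_smul]; rfl
    _ ≤ C * 1 := mul_le_mul_of_nonneg_left (hQ.2 a) hC
    _ = C := mul_one C

lemma sum_range_pow_mulVec_apply_le (hQ : Q ∈ subStochastic ι) {v : ι → ℝ} {C : ℝ}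
    (hC : 0 ≤ C) (hv : ∀ a, v a ≤ C) (n : ℕ) (a : ι) : ((∑ r ∈ range n, Q ^ r) *ᵥ v) a ≤ n * C := by
  rw [sum_mulVec, Finset.sum_apply]
  calc ∑ r ∈ range n, (Q ^ r *ᵥ v) a ≤ ∑ _r ∈ range n, C :=
        sum_le_sum fun r _ => mulVec_apply_le_of_mem_subStochastic (pow_mem hQ r) hC hv a
    _ = n * C := by simp

lemma sum_range_pow_mulVec_nonneg (hQ : Q ∈ subStochastic ι) {v : ι → ℝ} (hv : 0 ≤ v) (n : ℕ) :
    0 ≤ (∑ r ∈ range n, Q ^ r) *ᵥ v := by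
  rw [sum_mulVec]
  exact sum_nonneg fun r _ => mulVec_nonneg_of_nonneg (pow_mem hQ r).1 hv

end subStochastic

lemma deficit_nonneg {Q : Matrix ι ι ℝ} (hQ : Q ∈ subStochastic ι) : 0 ≤ deficit Q :=
  sub_nonneg.2 hQ.2

lemma sum_range_pow_mulVec_deficit (Q : Matrix ι ι ℝ) (n : ℕ) :
    (∑ r ∈ range n, Q ^ r) *ᵥ deficit Q = 1 - Q ^ n *ᵥ 1 := by
  have h : deficit Q = (1 - Q) *ᵥ 1 := by rw [sub_mulVec, one_mulVec]; rfl
  rw [h, mulVec_mulVec, geom_sum_mul_neg, sub_mulVec, one_mulVec]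

lemma eq_pow_mulVec_add_sum_range_mulVec {Q : Matrix ι ι ℝ} {u g : ι → ℝ}
    (hu : u = Q *ᵥ u + g) (n : ℕ) :
    u = Q ^ n *ᵥ u + (∑ r ∈ range n, Q ^ r) *ᵥ g := by
  have hg : g = (1 - Q) *ᵥ u := by
    rw [sub_mulVec, one_mulVec]; linear_combination -hu
  rw [hg, mulVec_mulVec, geom_sum_mul_neg, sub_mulVec, one_mulVec]
  abel

-- With `Q` the chain killed on leaving the state space and `g a` the probability of a one-step
-- exit from `a` into a target set, the series sums the probability of exiting there at time `n`.
noncomputable def hitProb (Q : Matrix ι ι ℝ) (g : ι → ℝ) : ι → ℝ :=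
  fun a => ∑' n, (Q ^ n *ᵥ g) a

section hitProb

variable {Q : Matrix ι ι ℝ} {g : ι → ℝ}

lemma sum_range_pow_mulVec_apply_le_one (hQ : Q ∈ subStochastic ι)
    (hgf : g ≤ deficit Q) (N : ℕ) (a : ι) : ∑ n ∈ range N, (Q ^ n *ᵥ g) a ≤ 1 := by
  rw [← Finset.sum_apply, ← sum_mulVec]
  calc ((∑ n ∈ range N, Q ^ n) *ᵥ g) a ≤ ((∑ n ∈ range N, Q ^ n) *ᵥ deficit Q) a :=
        mulVec_mono_of_nonneg (fun b c => by
          rw [Matrix.sum_apply]; exact sum_nonneg fun n _ => (pow_mem hQ n).1 b c) hgf a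
    _ = 1 - (Q ^ N *ᵥ 1) a := by rw [sum_range_pow_mulVec_deficit]; rfl
    _ ≤ 1 := sub_le_self _ (mulVec_nonneg_of_nonneg (pow_mem hQ N).1 zero_le_one a)

lemma hasSum_pow_mulVec (hQ : Q ∈ subStochastic ι) (hg0 : 0 ≤ g) (hgf : g ≤ deficit Q) :
    HasSum (fun n => Q ^ n *ᵥ g) (hitProb Q g) :=
  Pi.hasSum.2 fun a => (summable_of_sum_range_le
    (fun n => mulVec_nonneg_of_nonneg (pow_mem hQ n).1 hg0 a)
    (sum_range_pow_mulVec_apply_le_one hQ hgf · a)).hasSum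

lemma hitProb_nonneg (hQ : Q ∈ subStochastic ι) (hg0 : 0 ≤ g) : 0 ≤ hitProb Q g := fun a =>
  tsum_nonneg fun n => mulVec_nonneg_of_nonneg (pow_mem hQ n).1 hg0 a

lemma hitProb_eq_mulVec_add (hQ : Q ∈ subStochastic ι) (hg0 : 0 ≤ g) (hgf : g ≤ deficit Q) :
    hitProb Q g = Q *ᵥ hitProb Q g + g := by
  have h := hasSum_pow_mulVec hQ hg0 hgf
  have hshift := (hasSum_nat_add_iff' 1).2 h
  have hmap := h.map (mulVecLin Q) (continuous_const.matrix_mulVec continuous_id)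
  simp only [Function.comp_def, mulVecLin_apply, mulVec_mulVec, ← pow_succ'] at hmap
  rw [← hshift.unique hmap]
  simp

end hitProb

section estimate

variable {Q : Matrix ι ι ℝ}

lemma sub_le_sum_range_pow_mulVec_one (hQ : Q ∈ subStochastic ι) {F : ℝ} (hF0 : 0 ≤ F)
    (hF : ∀ a, deficit Q a ≤ F) (m : ℕ) (a : ι) :
    m - m ^ 2 * F ≤ ((∑ n ∈ range m, Q ^ n) *ᵥ 1) a := by
  rw [sum_mulVec, Finset.sum_apply]
  calc (m : ℝ) - m ^ 2 * F = ∑ _n ∈ range m, (1 - m * F) := by simp; ring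
    _ ≤ ∑ n ∈ range m, (Q ^ n *ᵥ 1) a := sum_le_sum fun n hn => by
        have hdef := congrFun (sum_range_pow_mulVec_deficit Q n) a
        have hle := sum_range_pow_mulVec_apply_le hQ hF0 hF n a
        have hnm : (n : ℝ) ≤ m := by exact_mod_cast (mem_range.1 hn).le
        simp only [Pi.sub_apply, Pi.one_apply] at hdef
        nlinarith

lemma sum_range_sum_range_pow_mulVec_apply_le (hQ : Q ∈ subStochastic ι) {v : ι → ℝ} {C : ℝ}
    (hC : 0 ≤ C) (hv : ∀ a, v a ≤ C) (m : ℕ) (a : ι) :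
    (∑ n ∈ range m, (∑ r ∈ range n, Q ^ r) *ᵥ v) a ≤ m ^ 2 * C := by
  rw [Finset.sum_apply]
  calc ∑ n ∈ range m, ((∑ r ∈ range n, Q ^ r) *ᵥ v) a ≤ ∑ _n ∈ range m, (m * C) :=
        sum_le_sum fun n hn => (sum_range_pow_mulVec_apply_le hQ hC hv n a).trans <|
          mul_le_mul_of_nonneg_right (by exact_mod_cast (mem_range.1 hn).le) hC
    _ = m ^ 2 * C := by simp; ring

lemma natCast_smul_eq_sum_range_pow_mulVec_add {u g : ι → ℝ} (hu : u = Q *ᵥ u + g) (m : ℕ) :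
    (m : ℝ) • u = (∑ n ∈ range m, Q ^ n) *ᵥ u + ∑ n ∈ range m, (∑ r ∈ range n, Q ^ r) *ᵥ g :=
  calc (m : ℝ) • u = ∑ _n ∈ range m, u := by rw [sum_const, card_range, Nat.cast_smul_eq_nsmul]
    _ = ∑ n ∈ range m, (Q ^ n *ᵥ u + (∑ r ∈ range n, Q ^ r) *ᵥ g) :=
        sum_congr rfl fun n _ => eq_pow_mulVec_add_sum_range_mulVec hu n
    _ = _ := by rw [sum_add_distrib, sum_mulVec]

lemma card_mul_sub_le_of_hitProb {g w : ι → ℝ} {l δ : ℝ} {m : ℕ} (hQ : Q ∈ subStochastic ι)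
    (hg0 : 0 ≤ g) (hgf : g ≤ deficit Q) (hl : 0 < l) (hw : ∀ a, l ≤ w a)
    (hS : ∀ a b, δ ≤ (∑ n ∈ range m, Q ^ n) a b) {a b : ι}
    (hmax : ∀ c, hitProb Q g c ≤ hitProb Q g a) (hmin : ∀ c, hitProb Q g b ≤ hitProb Q g c) :
    Fintype.card ι * δ * (hitProb Q g a - hitProb Q g b) ≤
      m ^ 2 * ((w ⬝ᵥ deficit Q) / l) * hitProb Q g b + m ^ 2 * ((w ⬝ᵥ g) / l) := by
  have hw0 : 0 ≤ w := fun a => hl.le.trans (hw a)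
  exact card_mul_sub_le_of_minorization hS
    (fun x => by
      simpa using sum_range_pow_mulVec_apply_le hQ (v := 1) zero_le_one (fun _ => le_rfl) m x)
    (sub_le_sum_range_pow_mulVec_one hQ
      (div_nonneg (dotProduct_nonneg_of_nonneg hw0 (deficit_nonneg hQ)) hl.le)
      (le_dotProduct_div hl hw (deficit_nonneg hQ)) m)
    (sum_nonneg fun n _ => sum_range_pow_mulVec_nonneg hQ hg0 n)
    (sum_range_sum_range_pow_mulVec_apply_le hQ
      (div_nonneg (dotProduct_nonneg_of_nonneg hw0 hg0) hl.le) (le_dotProduct_div hl hw hg0) m)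
    (natCast_smul_eq_sum_range_pow_mulVec_add (hitProb_eq_mulVec_add hQ hg0 hgf) m)
    (hitProb_nonneg hQ hg0) hmax hmin

theorem abs_hitProb_mul_div_sub_one_le {g w : ι → ℝ} {l δ : ℝ} {m : ℕ}
    (hQ : Q ∈ subStochastic ι) (hg0 : 0 ≤ g) (hgf : g ≤ deficit Q) (hwg : 0 < w ⬝ᵥ g)
    (hl : 0 < l) (hw : ∀ a, l ≤ w a) (hw1 : ∑ a, w a = 1) (hδ : 0 < δ)
    (hS : ∀ a b, δ ≤ (∑ n ∈ range m, Q ^ n) a b)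
    (hsmall : (∑ b, |(w ᵥ* Q - w) b|) * (m ^ 2 / (Fintype.card ι * δ * l)) ≤ 1 / 2) (i : ι) :
    |hitProb Q g i * (w ⬝ᵥ deficit Q) / (w ⬝ᵥ g) - 1| ≤
      4 * (m ^ 2 / (Fintype.card ι * δ * l)) * (w ⬝ᵥ deficit Q + ∑ b, |(w ᵥ* Q - w) b|) := by
  set u := hitProb Q g
  set c := w ⬝ᵥ u
  have hu0 := hitProb_nonneg hQ hg0
  have hw0 : 0 ≤ w := fun a => hl.le.trans (hw a)
  have hAF : 0 ≤ w ⬝ᵥ deficit Q := dotProduct_nonneg_of_nonneg hw0 (deficit_nonneg hQ)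
  have : Nonempty ι := ⟨i⟩
  obtain ⟨a, hmax⟩ := Finite.exists_max u
  obtain ⟨b, hmin⟩ := Finite.exists_min u
  have hbc : u b ≤ c := le_dotProduct_of_le hw0 hw1 hmin
  have hdist : ∀ x, |u x - c| ≤ u a - u b := fun x => abs_le.2
    ⟨by linarith [hmin x, dotProduct_le_of_le hw0 hw1 hmax], by linarith [hmax x]⟩
  have hpair : |c * (w ⬝ᵥ deficit Q) - w ⬝ᵥ g| ≤ (∑ x, |(w ᵥ* Q - w) x|) * (u a - u b) := by
    rw [dotProduct_mul_dotProduct_deficit_sub Q hw1 (hitProb_eq_mulVec_add hQ hg0 hgf), sum_mul]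
    refine (abs_sum_le_sum_abs _ _).trans (sum_le_sum fun x _ => ?_)
    rw [abs_mul]
    exact mul_le_mul_of_nonneg_left (hdist x) (abs_nonneg _)
  refine abs_mul_div_sub_one_le hwg hAF (sum_nonneg fun _ _ => abs_nonneg _)
    (hu0 b |>.trans hbc) (hdist i) hpair ?_ hsmall
  have hcard : (0 : ℝ) < Fintype.card ι := by exact_mod_cast Fintype.card_pos
  rw [div_mul_eq_mul_div, le_div_iff₀ (by positivity)]
  calc (u a - u b) * (Fintype.card ι * δ * l) = (Fintype.card ι * δ * (u a - u b)) * l := by ring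
    _ ≤ (m ^ 2 * ((w ⬝ᵥ deficit Q) / l) * c + m ^ 2 * ((w ⬝ᵥ g) / l)) * l := by
        gcongr
        exact (card_mul_sub_le_of_hitProb hQ hg0 hgf hl hw hS hmax hmin).trans (by gcongr)
    _ = m ^ 2 * ((w ⬝ᵥ deficit Q) * c + w ⬝ᵥ g) := by field_simp

end estimate

section irreducible

variable {B : Matrix ι ι ℝ}

lemma vecMul_pow_eq_of_vecMul_eq {w : ι → ℝ} (hwB : w ᵥ* B = w) (n : ℕ) : w ᵥ* B ^ n = w := by
  induction n with
  | zero => simp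
  | succ n ih => rw [pow_succ, ← vecMul_vecMul, ih, hwB]

lemma pos_of_vecMul_eq_of_irreducible (hB : B ∈ rowStochastic ℝ ι)
    (hirr : ∀ a b, ∃ n, 0 < (B ^ n) a b) {w : ι → ℝ} (hw0 : 0 ≤ w) (hw1 : ∑ a, w a = 1)
    (hwB : w ᵥ* B = w) (b : ι) : 0 < w b := by
  obtain ⟨a, ha⟩ : ∃ a, 0 < w a := by
    by_contra! h
    have : ∑ a, w a = 0 := sum_eq_zero fun a _ => le_antisymm (h a) (hw0 a)
    linarith
  obtain ⟨n, hn⟩ := hirr a b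
  rw [← vecMul_pow_eq_of_vecMul_eq hwB n]
  exact (mul_pos ha hn).trans_le <| single_le_sum (f := fun c => w c * (B ^ n) c b)
    (fun c _ => mul_nonneg (hw0 c) ((pow_mem hB n).1 c b)) (mem_univ a)

lemma exists_sum_range_pow_pos_of_irreducible (hB : B ∈ rowStochastic ℝ ι)
    (hirr : ∀ a b, ∃ n, 0 < (B ^ n) a b) : ∃ m, ∀ a b, 0 < (∑ n ∈ range m, B ^ n) a b := by
  choose N hN using hirr
  refine ⟨univ.sup (fun p : ι × ι => N p.1 p.2) + 1, fun a b => ?_⟩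
  rw [Matrix.sum_apply]
  refine sum_pos' (fun n _ => (pow_mem hB n).1 a b) ⟨N a b, mem_range.2 ?_, hN a b⟩
  exact Nat.lt_succ_of_le (le_sup (f := fun p : ι × ι => N p.1 p.2) (mem_univ (a, b)))

end irreducible

lemma exists_eventually_le_sum_range_pow [Nonempty ι] {α : Type*} {l : Filter α}
    {Q : α → Matrix ι ι ℝ} {B : Matrix ι ι ℝ} (hQB : Tendsto Q l (𝓝 B))
    (hB : B ∈ rowStochastic ℝ ι) (hirr : ∀ a b, ∃ n, 0 < (B ^ n) a b) :
    ∃ m δ, 0 < δ ∧ ∀ᶠ x in l, ∀ a b, δ ≤ (∑ n ∈ range m, Q x ^ n) a b := by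
  obtain ⟨m, hm⟩ := exists_sum_range_pow_pos_of_irreducible hB hirr
  obtain ⟨p, hp⟩ := Finite.exists_min fun p : ι × ι => (∑ n ∈ range m, B ^ n) p.1 p.2
  refine ⟨m, _, half_pos (hm p.1 p.2), eventually_all.2 fun a => eventually_all.2 fun b => ?_⟩
  have hSB := tendsto_finsetSum (range m) fun n _ => hQB.pow n
  refine ((tendsto_pi_nhds.1 (tendsto_pi_nhds.1 hSB a) b).eventually_const_lt ?_).mono
    fun _ h => h.le
  exact (half_lt_self (hm _ _)).trans_le (hp (a, b))

theorem tendsto_hitProb_div {α : Type*} {l : Filter α} [l.NeBot] {Q : α → Matrix ι ι ℝ}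
    {g : α → ι → ℝ} {B : Matrix ι ι ℝ} {w : ι → ℝ}
    (hQ : ∀ᶠ x in l, Q x ∈ subStochastic ι) (hg : ∀ᶠ x in l, 0 ≤ g x ∧ g x ≤ deficit (Q x))
    (hwg : ∀ᶠ x in l, 0 < w ⬝ᵥ g x) (hQB : Tendsto Q l (𝓝 B)) (hB1 : B *ᵥ 1 = 1)
    (hirr : ∀ a b, ∃ n, 0 < (B ^ n) a b) (hw0 : 0 ≤ w) (hw1 : ∑ a, w a = 1)
    (hwB : w ᵥ* B = w) (i : ι) :
    Tendsto (fun x => hitProb (Q x) (g x) i / ((w ⬝ᵥ g x) / (w ⬝ᵥ deficit (Q x)))) l (𝓝 1) := by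
  have hB : B ∈ rowStochastic ℝ ι := ⟨fun a b => ge_of_tendsto
    (tendsto_pi_nhds.1 (tendsto_pi_nhds.1 hQB a) b) (hQ.mono fun x hx => hx.1 a b), hB1⟩
  have : Nonempty ι := ⟨i⟩
  obtain ⟨a₀, hmin⟩ := Finite.exists_min w
  have hwpos := pos_of_vecMul_eq_of_irreducible hB hirr hw0 hw1 hwB a₀
  obtain ⟨m, δ, hδ, hS⟩ := exists_eventually_le_sum_range_pow hQB hB hirr
  set κ : ℝ := m ^ 2 / (Fintype.card ι * δ * w a₀)
  have hAF : Tendsto (fun x => w ⬝ᵥ deficit (Q x)) l (𝓝 0) := by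
    have hcont : Continuous fun A : Matrix ι ι ℝ => w ⬝ᵥ (1 - A *ᵥ 1) := by fun_prop
    simpa [deficit, hB1, Function.comp_def] using (hcont.tendsto B).comp hQB
  have hγ : Tendsto (fun x => ∑ b, |(w ᵥ* Q x - w) b|) l (𝓝 0) := by
    have hcont : Continuous fun A : Matrix ι ι ℝ => ∑ b, |(w ᵥ* A - w) b| := by fun_prop
    simpa [hwB, Function.comp_def] using (hcont.tendsto B).comp hQB
  have hsmall : ∀ᶠ x in l, (∑ b, |(w ᵥ* Q x - w) b|) * κ ≤ 1 / 2 := by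
    have h := hγ.mul_const κ
    rw [zero_mul] at h
    exact h.eventually (ge_mem_nhds (by norm_num))
  rw [tendsto_iff_norm_sub_tendsto_zero]
  refine squeeze_zero' (Eventually.of_forall fun _ => norm_nonneg _) ?_
    (by simpa using (hAF.add hγ).const_mul (4 * κ))
  filter_upwards [hQ, hg, hwg, hS, hsmall] with x hQx hgx hwgx hSx hsx
  rw [Real.norm_eq_abs, div_div_eq_mul_div]
  exact abs_hitProb_mul_div_sub_one_le hQx hgx.1 hgx.2 hwgx hwpos hmin hw1 hδ hSx hsx i

end Matrix

section restrict

variable {κ : Type*} [Fintype κ]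

lemma sum_eq_sum_subtype_of_not (p : κ → Prop) [DecidablePred p] {f : κ → ℝ}
    (hf : ∀ c, ¬ p c → f c = 0) : ∑ c, f c = ∑ c : Subtype p, f c := by
  rw [← Fintype.sum_subtype_add_sum_subtype p, Fintype.sum_eq_zero (fun c : {c // ¬ p c} => f c)
    (fun c => hf c c.2), add_zero]

lemma sum_sum_filter_mul_eq_dotProduct (p : κ → Prop) [DecidablePred p] (w : κ → ℝ)
    (A : κ → κ → ℝ) (s : Finset κ) :
    ∑ k ∈ s, ∑ j ∈ univ.filter p, w j * A j k =
      (fun j : Subtype p => w j) ⬝ᵥ fun j => ∑ k ∈ s, A j k := by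
  rw [sum_comm, sum_subtype (F := inferInstance) (univ.filter p) (p := p) (fun _ => by simp)]
  simp [dotProduct, mul_sum]

variable [DecidableEq κ] {p : κ → Prop} [DecidablePred p]

lemma ite_pow_apply (A : Matrix κ κ ℝ) (n : ℕ) (a b : Subtype p) :
    ((of fun c d => if p c ∧ p d then A c d else 0) ^ n) a b =
      (A.submatrix ((↑) : Subtype p → κ) (↑) ^ n) a b := by
  induction n generalizing b with
  | zero => simp [one_apply, Subtype.ext_iff]
  | succ n ih =>
    rw [pow_succ, pow_succ, mul_apply, mul_apply,
      sum_eq_sum_subtype_of_not p fun c hc => by simp [hc]]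
    simp [ih, Subtype.prop]

lemma ite_pow_mulVec_apply (A : Matrix κ κ ℝ) (v : κ → ℝ) (n : ℕ) (a : Subtype p) :
    ((of fun c d => if p c ∧ p d then A c d else 0) ^ n *ᵥ fun c => if p c then v c else 0) a =
      (A.submatrix ((↑) : Subtype p → κ) (↑) ^ n *ᵥ fun c : Subtype p => v c) a := by
  rw [mulVec, mulVec, dotProduct, dotProduct, sum_eq_sum_subtype_of_not p fun c hc => by simp [hc]]
  simp [ite_pow_apply, Subtype.prop]

lemma deficit_submatrix_apply {A : Matrix κ κ ℝ} (hA : A ∈ rowStochastic ℝ κ) {s : Finset κ}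
    (hs : ∀ b, b ∈ s ↔ ¬ p b) (a : Subtype p) :
    deficit (A.submatrix ((↑) : Subtype p → κ) (↑)) a = ∑ b ∈ s, A a b := by
  rw [deficit, Pi.sub_apply, Pi.one_apply, ← sum_row_of_mem_rowStochastic hA a,
    sum_subtype (F := inferInstance) s hs, ← Fintype.sum_subtype_add_sum_subtype p]
  simp [mulVec, dotProduct]

lemma submatrix_mem_subStochastic {A : Matrix κ κ ℝ} (hA : A ∈ rowStochastic ℝ κ) :
    A.submatrix ((↑) : Subtype p → κ) (↑) ∈ subStochastic (Subtype p) := by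
  refine ⟨fun a b => hA.1 a b, fun a => sub_nonneg.1 ?_⟩
  change 0 ≤ deficit (A.submatrix _ _) a
  rw [deficit_submatrix_apply hA (s := univ.filter (¬ p ·)) (by simp)]
  exact sum_nonneg fun b _ => hA.1 a b

end restrict

theorem stmt13_general (M M' : ℕ)
    (Pe : Fin M → Fin M → ℝ → ℝ) (P0 : Fin M → Fin M → ℝ) (lam : Fin M → ℝ)
    (G : Finset (Fin M)) (hGF : ∀ k ∈ G, M' ≤ (k:ℕ))
    (hPnn : ∀ a b, ∀ ε > (0:ℝ), 0 ≤ Pe a b ε)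
    (hProw : ∀ a : Fin M, ∀ ε > (0:ℝ), ∑ b, Pe a b ε = 1)
    (hlim : ∀ a b, Tendsto (fun ε => Pe a b ε) (𝓝[>] (0:ℝ)) (𝓝 (P0 a b)))
    -- `E` is one ergodic class under `P⁰`, with invariant probability `lam` on `E`
    (hrow0 : ∀ a : Fin M, (a:ℕ) < M' →
      ∑ b ∈ Finset.univ.filter (fun b : Fin M => (b:ℕ) < M'), P0 a b = 1)
    (hirr : ∀ a b : Fin M, (a:ℕ) < M' → (b:ℕ) < M' → ∃ n : ℕ,
      0 < ((Matrix.of fun c d : Fin M =>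
        if (c:ℕ) < M' ∧ (d:ℕ) < M' then P0 c d else 0) ^ n) a b)
    (hlamnn : ∀ a, 0 ≤ lam a) (hlamE : ∀ a : Fin M, M' ≤ (a:ℕ) → lam a = 0)
    (hlamsum : ∑ a, lam a = 1)
    (hlaminv : ∀ b : Fin M, (b:ℕ) < M' →
      ∑ a ∈ Finset.univ.filter (fun a : Fin M => (a:ℕ) < M'), lam a * P0 a b = lam b)
    -- the exit rate into `G` is positive for each `ε`
    (hGpos : ∀ ε > (0:ℝ),
      0 < ∑ k ∈ G, ∑ j ∈ Finset.univ.filter (fun j : Fin M => (j:ℕ) < M'),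
        lam j * Pe j k ε) :
    ∀ i : Fin M, (i:ℕ) < M' →
      Tendsto (fun ε =>
        (∑' n : ℕ,
          (((Matrix.of fun a b : Fin M =>
              if (a:ℕ) < M' ∧ (b:ℕ) < M' then Pe a b ε else 0) ^ n) *ᵥ
            (fun a : Fin M => if (a:ℕ) < M' then ∑ k ∈ G, Pe a k ε else 0)) i) /
        ((∑ k ∈ G, ∑ j ∈ Finset.univ.filter (fun j : Fin M => (j:ℕ) < M'),
            lam j * Pe j k ε) /
          (∑ k ∈ Finset.univ.filter (fun k : Fin M => M' ≤ (k:ℕ)),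
            ∑ j ∈ Finset.univ.filter (fun j : Fin M => (j:ℕ) < M'),
              lam j * Pe j k ε)))
        (𝓝[>] (0:ℝ)) (𝓝 1) := by
  intro i hi
  let E := {a : Fin M // (a:ℕ) < M'}
  set F := Finset.univ.filter (fun k : Fin M => M' ≤ (k:ℕ))
  have hF : ∀ k, k ∈ F ↔ ¬ (k:ℕ) < M' := by simp [F]
  have hE : ∀ k, k ∈ univ.filter (fun k : Fin M => (k:ℕ) < M') ↔ (k:ℕ) < M' := by simp
  let P : ℝ → Matrix (Fin M) (Fin M) ℝ := fun ε => of fun a b => Pe a b ε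
  have hP : ∀ ε > 0, P ε ∈ rowStochastic ℝ (Fin M) := fun ε hε =>
    mem_rowStochastic_iff_sum.2 ⟨fun a b => hPnn a b ε hε, fun a => hProw a ε hε⟩
  let Q : ℝ → Matrix E E ℝ := fun ε => (P ε).submatrix (↑) (↑)
  let g : ℝ → E → ℝ := fun ε j => ∑ k ∈ G, Pe j k ε
  have hdef : ∀ ε > 0, deficit (Q ε) = fun j : E => ∑ k ∈ F, Pe j k ε := fun ε hε =>
    funext (deficit_submatrix_apply (hP ε hε) hF)
  have hg : ∀ ε > 0, 0 ≤ g ε ∧ g ε ≤ deficit (Q ε) := fun ε hε => by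
    refine ⟨fun j => sum_nonneg fun k _ => hPnn j k ε hε, ?_⟩
    rw [hdef ε hε]
    exact fun j => sum_le_sum_of_subset_of_nonneg (fun k hk => (hF k).2 (not_lt.2 (hGF k hk)))
      fun k _ _ => hPnn j k ε hε
  have key := tendsto_hitProb_div (l := 𝓝[>] (0:ℝ)) (B := (of P0).submatrix ((↑) : E → Fin M) (↑))
    (w := fun j : E => lam j)
    (eventually_nhdsWithin_of_forall fun ε hε => submatrix_mem_subStochastic (hP ε hε))
    (eventually_nhdsWithin_of_forall hg)
    (eventually_nhdsWithin_of_forall fun ε hε =>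
      (hGpos ε hε).trans_eq (sum_sum_filter_mul_eq_dotProduct _ lam (fun j k => Pe j k ε) G))
    (tendsto_pi_nhds.2 fun a => tendsto_pi_nhds.2 fun b => hlim a b)
    (funext fun a => by simpa [mulVec, dotProduct, sum_subtype _ hE] using hrow0 a a.2)
    (fun a b => (hirr a b a.2 b.2).imp fun n hn => ite_pow_apply (of P0) n a b ▸ hn)
    (fun j => hlamnn j)
    (by rwa [← sum_eq_sum_subtype_of_not _ fun a ha => hlamE a (not_lt.1 ha)])
    (funext fun b => by simpa [vecMul, dotProduct, sum_subtype _ hE] using hlaminv b b.2)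
    ⟨i, hi⟩
  refine key.congr' (eventually_nhdsWithin_of_forall fun ε hε => ?_)
  have hAG := sum_sum_filter_mul_eq_dotProduct (fun j : Fin M => (j:ℕ) < M') lam
    (fun j k => Pe j k ε) G
  have hAF := sum_sum_filter_mul_eq_dotProduct (fun j : Fin M => (j:ℕ) < M') lam
    (fun j k => Pe j k ε) F
  dsimp only at hAG hAF ⊢
  rw [hAG, hAF, hitProb, hdef ε hε]
  congr 1
  exact tsum_congr fun n => (ite_pow_mulVec_apply (p := fun a : Fin M => (a:ℕ) < M') (P ε)
    (fun a => ∑ k ∈ G, Pe a k ε) n ⟨i, hi⟩).symm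

/-- Exit-distribution lemma. `E = {j : j < M'}` is one ergodic class under the
limiting matrix `P⁰` with invariant probability `lam`, exit probabilities to
`F = {k : M' ≤ k}` vanish as `ε ↓ 0`, and the family is asymptotically regular.
Then the probability that the chain, started at `i ∈ E`, first exits `E` into
`G ⊆ F` (expressed through the restricted matrix `Q ε` and the exit vector) is
asymptotically `(∑_{k∈G} ∑_{j∈E} lam j P_{jk}^ε)/(∑_{k∈F} ∑_{j∈E} lam j P_{jk}^ε)`. -/
theorem stmt13 (M M' : ℕ) (hM' : 0 < M') (hMM : M' < M)
    (Pe : Fin M → Fin M → ℝ → ℝ) (P0 : Fin M → Fin M → ℝ) (lam : Fin M → ℝ)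
    (G : Finset (Fin M)) (hGne : G.Nonempty) (hGF : ∀ k ∈ G, M' ≤ (k:ℕ))
    (hPnn : ∀ a b, ∀ ε > (0:ℝ), 0 ≤ Pe a b ε)
    (hProw : ∀ a : Fin M, ∀ ε > (0:ℝ), ∑ b, Pe a b ε = 1)
    -- each `Pe a b` is identically zero or positive for all `ε > 0`
    (halt : ∀ a b : Fin M, (∀ ε > (0:ℝ), Pe a b ε = 0) ∨ (∀ ε > (0:ℝ), 0 < Pe a b ε))
    -- asymptotic regularity of the ratios
    (hreg : ∀ a b c d : Fin M, (∀ ε > (0:ℝ), 0 < Pe c d ε) →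
      ∃ L : ENNReal, Tendsto (fun ε => ENNReal.ofReal (Pe a b ε / Pe c d ε))
        (𝓝[>] (0:ℝ)) (𝓝 L))
    (hlim : ∀ a b, Tendsto (fun ε => Pe a b ε) (𝓝[>] (0:ℝ)) (𝓝 (P0 a b)))
    -- `E` is one ergodic class under `P⁰`, with invariant probability `lam` on `E`
    (hrow0 : ∀ a : Fin M, (a:ℕ) < M' →
      ∑ b ∈ Finset.univ.filter (fun b : Fin M => (b:ℕ) < M'), P0 a b = 1)
    (hirr : ∀ a b : Fin M, (a:ℕ) < M' → (b:ℕ) < M' → ∃ n : ℕ,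
      0 < ((Matrix.of fun c d : Fin M =>
        if (c:ℕ) < M' ∧ (d:ℕ) < M' then P0 c d else 0) ^ n) a b)
    (hlamnn : ∀ a, 0 ≤ lam a) (hlamE : ∀ a : Fin M, M' ≤ (a:ℕ) → lam a = 0)
    (hlamsum : ∑ a, lam a = 1)
    (hlaminv : ∀ b : Fin M, (b:ℕ) < M' →
      ∑ a ∈ Finset.univ.filter (fun a : Fin M => (a:ℕ) < M'), lam a * P0 a b = lam b)
    -- exit probabilities vanish
    (hexit : ∀ a : Fin M, (a:ℕ) < M' →
      Tendsto (fun ε => ∑ k ∈ Finset.univ.filter (fun k : Fin M => M' ≤ (k:ℕ)),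
        Pe a k ε) (𝓝[>] (0:ℝ)) (𝓝 0))
    -- the exit rate into `G` is positive for each `ε`
    (hGpos : ∀ ε > (0:ℝ),
      0 < ∑ k ∈ G, ∑ j ∈ Finset.univ.filter (fun j : Fin M => (j:ℕ) < M'),
        lam j * Pe j k ε) :
    ∀ i : Fin M, (i:ℕ) < M' →
      Tendsto (fun ε =>
        (∑' n : ℕ,
          (((Matrix.of fun a b : Fin M =>
              if (a:ℕ) < M' ∧ (b:ℕ) < M' then Pe a b ε else 0) ^ n) *ᵥ
            (fun a : Fin M => if (a:ℕ) < M' then ∑ k ∈ G, Pe a k ε else 0)) i) /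
        ((∑ k ∈ G, ∑ j ∈ Finset.univ.filter (fun j : Fin M => (j:ℕ) < M'),
            lam j * Pe j k ε) /
          (∑ k ∈ Finset.univ.filter (fun k : Fin M => M' ≤ (k:ℕ)),
            ∑ j ∈ Finset.univ.filter (fun j : Fin M => (j:ℕ) < M'),
              lam j * Pe j k ε)))
        (𝓝[>] (0:ℝ)) (𝓝 1) :=
  stmt13_general M M' Pe P0 lam G hGF hPnn hProw hlim hrow0 hirr hlamnn hlamE hlamsum hlaminv hGpos
end
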